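/- There exist an absolute constant C > 0 and an absolute constant D such that for every integer d ≥ D: Σ_{k ≥ ⌈d^(1.01)⌉} N(d,k) · ν_d(k) ≤ C · d^(−0.51), where the sum is over all integers k ≥ d^(1.01). -/

import Mathlib

open Real Filter

/-- Distinct eigenvalues (up to constants) of the NTK on the sphere `S^d`:
`ν_d(k) = d^d · k^(k−2) · (k+d)^(−(k+d+1)) · (k² + k·d + d)`. -/
noncomputable def nuNT (d k : ℕ) : ℝ :=
  (d : ℝ) ^ (d : ℝ) * (k : ℝ) ^ ((k : ℝ) - 2) *
    ((k : ℝ) + (d : ℝ)) ^ (-((k : ℝ) + (d : ℝ) + 1)) *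
    ((k : ℝ) ^ 2 + (k : ℝ) * (d : ℝ) + (d : ℝ))

/-- Dimension of the space of spherical harmonics of degree `k` on `S^d ⊆ ℝ^(d+1)`. -/
def Nsph (d k : ℕ) : ℕ :=
  if k = 0 then 1
  else (k + d).choose k - (if 2 ≤ k then (k + d - 2).choose (k - 2) else 0)

/-- `λ_d(0) = 1` and `λ_d(k) = ν_d(k)` for `k ≥ 1`. -/
noncomputable def lamNT (d k : ℕ) : ℝ := if k = 0 then 1 else nuNT d k

/-! By Stirling's formula `C(k+d, k) ≤ (e/2π) √((k+d)/(kd)) (k+d)^(k+d) / (k^k d^d)`, and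
`N(d,k) ≤ 2d/(k+d) · C(k+d, k)`; the exponential factors then cancel exactly against those of
`ν_d(k)`, so that `N(d,k) ν_d(k) ≤ (e/π) √(2d) / k² ≤ √(2d) / k²` once `k ≥ d`. Summing `1/k²`
over `k ≥ K = ⌈d^1.01⌉` costs at most `2/K`, and `2√(2d)/d^1.01 = 2√2 · d^(-0.51)`. -/

open scoped Nat

theorem factorial_le_exp_one_mul_sqrt_mul_pow {n : ℕ} (hn : n ≠ 0) :
    (n ! : ℝ) ≤ exp 1 * √n * (n / exp 1) ^ n := by
  obtain ⟨m, rfl⟩ := Nat.exists_eq_succ_of_ne_zero hn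
  have h : Stirling.stirlingSeq (m + 1) ≤ exp 1 / √2 := by
    simpa [← Stirling.stirlingSeq_one] using Stirling.stirlingSeq'_antitone (Nat.zero_le m)
  rw [Stirling.stirlingSeq, div_le_iff₀ (by positivity)] at h
  calc _ ≤ _ := h
    _ = _ := by rw [sqrt_mul zero_le_two]; field_simp

theorem cast_add_choose_le {k d : ℕ} (hk : k ≠ 0) (hd : d ≠ 0) :
    ((k + d).choose k : ℝ) ≤
      exp 1 / (2 * π) * (√(k + d) / (√k * √d)) * ((k + d) ^ (k + d) / (k ^ k * d ^ d)) := by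
  rw [Nat.cast_choose ℝ (Nat.le_add_right k d), Nat.add_sub_cancel_left]
  have hk' : (0 : ℝ) < k := by positivity
  have hd' : (0 : ℝ) < d := by positivity
  calc _ ≤ exp 1 * √(k + d : ℕ) * ((k + d : ℕ) / exp 1) ^ (k + d) /
        (√(2 * π * k) * (k / exp 1) ^ k * (√(2 * π * d) * (d / exp 1) ^ d)) := by
        gcongr
        · exact factorial_le_exp_one_mul_sqrt_mul_pow (by omega)
        · exact Stirling.le_factorial_stirling k
        · exact Stirling.le_factorial_stirling d
    _ = _ := by
        push_cast
        rw [sqrt_mul' _ hk'.le, sqrt_mul' _ hd'.le, div_pow, div_pow, div_pow, pow_add (exp 1)]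
        field_simp
        exact (sq_sqrt (by positivity)).symm

theorem Nsph_add_one_add_one (d m : ℕ) :
    Nsph (d + 1) (m + 1) = (m + d + 1).choose (m + 1) + (m + d).choose m := by
  rcases m with _ | m
  · simp [Nsph]; ring
  have h₁ := Nat.choose_succ_succ' (m + d + 1 + 1) (m + 1)
  have h₂ := Nat.choose_succ_succ' (m + d + 1) m
  rw [Nsph, if_neg (by omega), if_pos (by omega), show m + 1 + 1 + (d + 1) - 2 = m + d + 1 by omega,
    show m + 1 + 1 - 2 = m by omega, show m + 1 + 1 + (d + 1) = m + d + 1 + 1 + 1 by omega,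
    show m + 1 + d + 1 = m + d + 1 + 1 by omega, show m + 1 + d = m + d + 1 by omega]
  omega

theorem add_mul_Nsph_le {d : ℕ} (hd : d ≠ 0) (k : ℕ) :
    (k + d) * Nsph d k ≤ 2 * d * (k + d).choose k := by
  obtain ⟨e, rfl⟩ := Nat.exists_eq_add_one_of_ne_zero hd
  rcases k with _ | m
  · simp [Nsph]
  have hpascal := Nat.choose_succ_succ' (m + e) m
  have hratio := Nat.choose_mul_succ_eq (m + e + 1) (m + 1)
  rw [show m + e + 1 + 1 - (m + 1) = e + 1 by omega, show m + e + 1 + 1 = m + 1 + (e + 1) by omega]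
    at hratio
  calc (m + 1 + (e + 1)) * Nsph (e + 1) (m + 1)
      ≤ (m + 1 + (e + 1)) * (2 * (m + e + 1).choose (m + 1)) := by
        rw [Nsph_add_one_add_one]; gcongr; omega
    _ = 2 * (e + 1) * (m + 1 + (e + 1)).choose (m + 1) := by
        rw [mul_left_comm, mul_comm _ ((m + e + 1).choose (m + 1)), hratio]; ring

theorem nuNT_nonneg (d k : ℕ) : 0 ≤ nuNT d k := by
  unfold nuNT; positivity

theorem nuNT_eq {d k : ℕ} (hk : k ≠ 0) :
    nuNT d k = d ^ d * k ^ k * (k ^ 2 + k * d + d) / (k ^ 2 * (k + d) ^ (k + d + 1) : ℝ) := by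
  have hk' : (0 : ℝ) < k := by positivity
  rw [nuNT, rpow_natCast, rpow_sub hk', rpow_natCast, rpow_two,
    show -((k : ℝ) + d + 1) = -((k + d + 1 : ℕ) : ℝ) by push_cast; ring,
    rpow_neg (by positivity), rpow_natCast]
  field_simp

theorem Nsph_mul_nuNT_le {d k : ℕ} (hd : d ≠ 0) (hdk : d ≤ k) :
    (Nsph d k : ℝ) * nuNT d k ≤ √(2 * d) / k ^ 2 := by
  have hk : k ≠ 0 := by omega
  have hd₀ : (0 : ℝ) < d := by positivity
  have hd₁ : (1 : ℝ) ≤ d := by exact_mod_cast Nat.one_le_iff_ne_zero.mpr hd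
  have hdk' : (d : ℝ) ≤ k := by exact_mod_cast hdk
  set E : ℝ := (k + d) ^ (k + d) / (k ^ k * d ^ d) with hE
  set S : ℝ := k ^ 2 + k * d + d
  have hN : (Nsph d k : ℝ) ≤ 2 * d / (k + d) * (k + d).choose k := by
    rw [div_mul_eq_mul_div, le_div_iff₀ (by positivity), mul_comm]
    exact_mod_cast add_mul_Nsph_le hd k
  have hEν : E * nuNT d k = S / (k ^ 2 * (k + d)) := by
    rw [nuNT_eq hk, hE]; field_simp; ring
  have hS : S ≤ (k + d) ^ 2 := by nlinarith
  have hroot : d * (√(k + d) / (√k * √d)) ≤ √(2 * d) := by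
    have hsum : √(k + d) ≤ √2 * √k := by
      rw [← sqrt_mul zero_le_two]; exact sqrt_le_sqrt (by linarith)
    rw [sqrt_mul zero_le_two, mul_div_assoc', div_le_iff₀ (by positivity)]
    calc d * √(k + d) ≤ d * (√2 * √k) := by gcongr
      _ = √2 * √d * (√k * √d) := by linear_combination (-(√2 * √k)) * mul_self_sqrt hd₀.le
  have he : exp 1 / π ≤ 1 := by
    rw [div_le_one pi_pos]; linarith [exp_one_lt_d9, pi_gt_three]
  calc (Nsph d k : ℝ) * nuNT d k
      ≤ 2 * d / (k + d) * (exp 1 / (2 * π) * (√(k + d) / (√k * √d)) * E) * nuNT d k := by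
        gcongr
        · exact nuNT_nonneg d k
        · exact hN.trans (by gcongr; exact cast_add_choose_le hk hd)
    _ = 2 * d / (k + d) * (exp 1 / (2 * π) * (√(k + d) / (√k * √d))) * (E * nuNT d k) := by
        ring
    _ = exp 1 / π * (d * (√(k + d) / (√k * √d))) * (S / (k + d) ^ 2) / k ^ 2 := by
        rw [hEν]; field_simp
    _ ≤ 1 * √(2 * d) * 1 / k ^ 2 := by
        gcongr; rwa [div_le_one (by positivity)]
    _ = √(2 * d) / k ^ 2 := by ring

theorem tsum_le_of_le_div_sq {f : ℕ → ℝ} {c : ℝ} {K : ℕ} (hK : K ≠ 0) (hf₀ : ∀ j, 0 ≤ f j)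
    (hf : ∀ j, f j ≤ c / (K + j) ^ 2) : ∑' j, f j ≤ 2 * c / K := by
  have hc : 0 ≤ c := by
    have := (hf₀ 0).trans (hf 0)
    rwa [le_div_iff₀ (by positivity), zero_mul] at this
  obtain ⟨L, rfl⟩ := Nat.exists_eq_add_one_of_ne_zero hK
  refine Real.tsum_le_of_sum_range_le hf₀ fun n => ?_
  calc ∑ j ∈ Finset.range n, f j
      ≤ ∑ j ∈ Finset.range n, c * (((L + 1 + j : ℕ) : ℝ) ^ 2)⁻¹ :=
        Finset.sum_le_sum fun j _ => by simpa [div_eq_mul_inv] using hf j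
    _ = c * ∑ i ∈ Finset.Ioo L (L + 1 + n), ((i : ℝ) ^ 2)⁻¹ := by
        rw [← Finset.Ico_add_one_left_eq_Ioo, Finset.sum_Ico_eq_sum_range, Finset.mul_sum,
          Nat.add_sub_cancel_left]
    _ ≤ c * (2 / (L + 1)) := by gcongr; exact sum_Ioo_inv_sq_le L _
    _ = 2 * c / (L + 1 : ℕ) := by push_cast; ring

/-- An absolute constant C > 0 and D such that for all d ≥ D, the tail sum over all
integers k ≥ d^1.01 of N(d,k)·ν_d(k) is at most C·d^(−0.51). -/
theorem tail_sum_Nsph_mul_nuNT_le :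
    ∃ C : ℝ, 0 < C ∧ ∃ D : ℕ, ∀ d : ℕ, D ≤ d →
      ∑' k : ℕ, (Nsph d (⌈(d : ℝ) ^ (1.01 : ℝ)⌉₊ + k) : ℝ) *
          nuNT d (⌈(d : ℝ) ^ (1.01 : ℝ)⌉₊ + k) ≤
        C * (d : ℝ) ^ (-(0.51 : ℝ)) := by
  refine ⟨2 * √2, by positivity, 1, fun d hd => ?_⟩
  set K := ⌈(d : ℝ) ^ (1.01 : ℝ)⌉₊
  have hd₁ : (1 : ℝ) ≤ d := by exact_mod_cast hd
  have hK : (d : ℝ) ^ (1.01 : ℝ) ≤ K := Nat.le_ceil _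
  have hdK : d ≤ K := by exact_mod_cast (self_le_rpow_of_one_le hd₁ (by norm_num)).trans hK
  calc _ ≤ 2 * √(2 * d) / K :=
        tsum_le_of_le_div_sq (by omega) (fun j => mul_nonneg (Nat.cast_nonneg _) (nuNT_nonneg _ _))
          fun j => by simpa using Nsph_mul_nuNT_le (by omega) (by omega : d ≤ K + j)
    _ = 2 * √2 * (√d / K) := by rw [sqrt_mul zero_le_two]; ring
    _ ≤ 2 * √2 * (√d / d ^ (1.01 : ℝ)) := by gcongr
    _ = 2 * √2 * (d : ℝ) ^ (-(0.51 : ℝ)) := by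
        rw [sqrt_eq_rpow d, ← rpow_sub (by positivity)]; norm_num
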